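/- Let φ : 𝔻 → 𝔻 be holomorphic. Then for all z, w ∈ 𝔻: e^{-2k(z,w)} ≤ (1 - D_h φ(z))/(1 - D_h φ(w)) ≤ e^{2k(z,w)}, whenever D_h φ(w) < 1 (equivalently φ is not an automorphism). -/

import Mathlib

open Metric Set

noncomputable def Dh (φ : ℂ → ℂ) (z : ℂ) : ℝ :=
  (1 - ‖z‖ ^ 2) * ‖deriv φ z‖ / (1 - ‖φ z‖ ^ 2)

noncomputable def pdist (z w : ℂ) : ℝ :=
  ‖(z - w) / (1 - (starRingEnd ℂ) w * z)‖

noncomputable def hdist (z w : ℂ) : ℝ :=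
  Real.log ((1 + pdist z w) / (1 - pdist z w))
/-!
Conjugating by the disk automorphisms `mobius a z = (a - z) / (1 - ā z)` leaves `D_h` invariant
and turns `pdist` into the modulus, so it suffices to treat `ψ` with `ψ 0 = 0`, `w = 0` and
`r = |ζ|`. Write `ψ ζ = ζ g ζ`; as `|g 0| = D_h ψ 0 < 1`, `g` maps the disk into itself.
Schwarz–Pick for `g`, together with `ψ' = g + ζ g'`, shows that both pairs `(|g 0|, |g ζ|)` and
`(|g ζ|, D_h ψ ζ)` of numbers in `[0, 1]` are within pseudo-hyperbolic distance `r`, i.e.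
`|x - y| ≤ r (1 - x y)`. Each such step changes `1 - x` by a factor in
`[(1-r)/(1+r), (1+r)/(1-r)]`, and `((1+r)/(1-r))^2 = exp (2 k)`.
-/

open Complex ComplexConjugate

noncomputable def mobius (a z : ℂ) : ℂ := (a - z) / (1 - conj a * z)

section Mobius

variable {a z : ℂ}

lemma sq_norm_one_sub_conj_mul_sub_sq_norm_sub (a z : ℂ) :
    ‖1 - conj a * z‖ ^ 2 - ‖a - z‖ ^ 2 = (1 - ‖a‖ ^ 2) * (1 - ‖z‖ ^ 2) := by
  simp only [Complex.sq_norm, normSq_apply, sub_re, sub_im, mul_re, mul_im, conj_re, conj_im,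
    one_re, one_im]
  ring

lemma one_sub_norm_mul_norm_le_norm_one_sub_conj_mul (a z : ℂ) :
    1 - ‖a‖ * ‖z‖ ≤ ‖1 - conj a * z‖ := by
  simpa [norm_mul] using norm_sub_norm_le (1 : ℂ) (conj a * z)

lemma one_sub_conj_mul_ne_zero (ha : ‖a‖ < 1) (hz : ‖z‖ < 1) : 1 - conj a * z ≠ 0 := by
  rw [← norm_pos_iff]
  refine lt_of_lt_of_le ?_ (one_sub_norm_mul_norm_le_norm_one_sub_conj_mul a z)
  nlinarith [norm_nonneg a, norm_nonneg z]

lemma one_sub_sq_norm_mobius (hd : 1 - conj a * z ≠ 0) :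
    1 - ‖mobius a z‖ ^ 2 = (1 - ‖a‖ ^ 2) * (1 - ‖z‖ ^ 2) / ‖1 - conj a * z‖ ^ 2 := by
  rw [← sq_norm_one_sub_conj_mul_sub_sq_norm_sub, mobius, norm_div, div_pow, sub_div,
    div_self (by positivity)]

lemma norm_mobius_lt_one (ha : ‖a‖ < 1) (hz : ‖z‖ < 1) : ‖mobius a z‖ < 1 := by
  have hd := one_sub_conj_mul_ne_zero ha hz
  have h : 0 < 1 - ‖mobius a z‖ ^ 2 := by
    rw [one_sub_sq_norm_mobius hd]
    exact div_pos (mul_pos (by nlinarith [norm_nonneg a]) (by nlinarith [norm_nonneg z]))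
      (pow_pos (norm_pos_iff.2 hd) 2)
  nlinarith [norm_nonneg (mobius a z)]

lemma mapsTo_mobius (ha : ‖a‖ < 1) : MapsTo (mobius a) (ball 0 1) (ball 0 1) := fun z hz => by
  rw [mem_ball_zero_iff] at hz ⊢
  exact norm_mobius_lt_one ha hz

@[simp] lemma mobius_self (a : ℂ) : mobius a a = 0 := by simp [mobius]

@[simp] lemma mobius_zero (a : ℂ) : mobius a 0 = a := by simp [mobius]

lemma mobius_mobius (ha : ‖a‖ < 1) (hz : ‖z‖ < 1) : mobius a (mobius a z) = z := by
  have hd := one_sub_conj_mul_ne_zero ha hz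
  have haa := one_sub_conj_mul_ne_zero ha ha
  have hnum : a - (a - z) / (1 - conj a * z) = z * (1 - conj a * a) / (1 - conj a * z) := by
    rw [eq_div_iff hd, sub_mul, div_mul_cancel₀ _ hd]; ring
  have hden : 1 - conj a * ((a - z) / (1 - conj a * z)) = (1 - conj a * a) / (1 - conj a * z) := by
    rw [eq_div_iff hd, sub_mul, mul_assoc, div_mul_cancel₀ _ hd]; ring
  rw [mobius, mobius, hnum, hden, div_div_div_cancel_right₀ hd, mul_div_cancel_right₀ _ haa]

lemma hasDerivAt_mobius (hd : 1 - conj a * z ≠ 0) :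
    HasDerivAt (mobius a) ((conj a * a - 1) / (1 - conj a * z) ^ 2) z := by
  have h := ((hasDerivAt_id z).const_sub a).div
    (((hasDerivAt_id z).const_mul (conj a)).const_sub 1) hd
  exact (show HasDerivAt (mobius a) _ z from h).congr_deriv (by simp only [id]; ring)

lemma differentiableOn_mobius (ha : ‖a‖ < 1) : DifferentiableOn ℂ (mobius a) (ball 0 1) :=
  fun _ hz => (hasDerivAt_mobius (one_sub_conj_mul_ne_zero ha (mem_ball_zero_iff.1 hz)))
    |>.differentiableAt.differentiableWithinAt

lemma Dh_mobius (ha : ‖a‖ < 1) (hz : ‖z‖ < 1) : Dh (mobius a) z = 1 := by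
  have hd := one_sub_conj_mul_ne_zero ha hz
  have hnorm : ‖conj a * a - 1‖ = 1 - ‖a‖ ^ 2 := by
    rw [conj_mul', ← norm_neg, neg_sub, ← ofReal_pow, ← ofReal_one, ← ofReal_sub, norm_real,
      Real.norm_of_nonneg (by nlinarith [norm_nonneg a])]
  have : 0 < 1 - ‖a‖ ^ 2 := by nlinarith [norm_nonneg a]
  have : 0 < 1 - ‖z‖ ^ 2 := by nlinarith [norm_nonneg z]
  rw [Dh, (hasDerivAt_mobius hd).deriv, one_sub_sq_norm_mobius hd, norm_div, norm_pow, hnorm]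
  field_simp

lemma pdist_eq_norm_mobius (z w : ℂ) : pdist z w = ‖mobius w z‖ := by
  rw [pdist, mobius, ← norm_neg, ← neg_div, neg_sub]

end Mobius

lemma Dh_comp {f g : ℂ → ℂ} {z : ℂ} (hf : DifferentiableAt ℂ f (g z))
    (hg : DifferentiableAt ℂ g z) (hgz : ‖g z‖ < 1) :
    Dh (f ∘ g) z = Dh f (g z) * Dh g z := by
  have : 1 - ‖g z‖ ^ 2 ≠ 0 := by nlinarith [norm_nonneg (g z)]
  simp only [Dh, Function.comp_apply, deriv_comp z hf hg, norm_mul]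
  field_simp

lemma Dh_eq_norm_deriv {ψ : ℂ → ℂ} (h0 : ψ 0 = 0) : Dh ψ 0 = ‖deriv ψ 0‖ := by
  simp [Dh, h0]

lemma norm_lt_one_of_mapsTo {φ : ℂ → ℂ} (hmap : MapsTo φ (ball 0 1) (ball 0 1)) {z : ℂ}
    (hz : ‖z‖ < 1) : ‖φ z‖ < 1 :=
  mem_ball_zero_iff.1 (hmap (mem_ball_zero_iff.2 hz))

noncomputable def recenter (φ : ℂ → ℂ) (w : ℂ) : ℂ → ℂ := mobius (φ w) ∘ φ ∘ mobius w

section Recenter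

variable {φ : ℂ → ℂ} {w : ℂ}

@[simp] lemma recenter_zero : recenter φ w 0 = 0 := by simp [recenter]

lemma recenter_mobius (hw : ‖w‖ < 1) {z : ℂ} (hz : ‖z‖ < 1) :
    recenter φ w (mobius w z) = mobius (φ w) (φ z) := by
  simp [recenter, mobius_mobius hw hz]

lemma mapsTo_recenter (hmap : MapsTo φ (ball 0 1) (ball 0 1)) (hw : ‖w‖ < 1) :
    MapsTo (recenter φ w) (ball 0 1) (ball 0 1) :=
  (mapsTo_mobius (norm_lt_one_of_mapsTo hmap hw)).comp (hmap.comp (mapsTo_mobius hw))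

lemma differentiableOn_recenter (hφ : DifferentiableOn ℂ φ (ball 0 1))
    (hmap : MapsTo φ (ball 0 1) (ball 0 1)) (hw : ‖w‖ < 1) :
    DifferentiableOn ℂ (recenter φ w) (ball 0 1) :=
  (differentiableOn_mobius (norm_lt_one_of_mapsTo hmap hw)).comp
    (hφ.comp (differentiableOn_mobius hw) (mapsTo_mobius hw)) (hmap.comp (mapsTo_mobius hw))

lemma Dh_recenter (hφ : DifferentiableOn ℂ φ (ball 0 1))
    (hmap : MapsTo φ (ball 0 1) (ball 0 1)) (hw : ‖w‖ < 1) {ζ : ℂ} (hζ : ‖ζ‖ < 1) :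
    Dh (recenter φ w) ζ = Dh φ (mobius w ζ) := by
  have hm : ‖mobius w ζ‖ < 1 := norm_mobius_lt_one hw hζ
  have hφm : ‖φ (mobius w ζ)‖ < 1 := norm_lt_one_of_mapsTo hmap hm
  have hφw : ‖φ w‖ < 1 := norm_lt_one_of_mapsTo hmap hw
  have hdiff {f : ℂ → ℂ} (hf : DifferentiableOn ℂ f (ball 0 1)) {u : ℂ} (hu : ‖u‖ < 1) :
      DifferentiableAt ℂ f u :=
    hf.differentiableAt (isOpen_ball.mem_nhds (mem_ball_zero_iff.2 hu))
  have hmob_w := hdiff (differentiableOn_mobius hw) hζ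
  have hφ_m := hdiff hφ hm
  rw [recenter, Dh_comp (g := φ ∘ mobius w) (hdiff (differentiableOn_mobius hφw) hφm)
      (hφ_m.comp ζ hmob_w) hφm, Function.comp_apply, Dh_comp hφ_m hmob_w hm, Dh_mobius hφw hφm,
    Dh_mobius hw hζ, one_mul, mul_one]

end Recenter

lemma abs_norm_sub_norm_le_pdist_mul {u v : ℂ} (hu : ‖u‖ < 1) (hv : ‖v‖ < 1) :
    |‖u‖ - ‖v‖| ≤ pdist u v * (1 - ‖u‖ * ‖v‖) := by
  -- `1 - pdist u v ^ 2 = (1 - ‖u‖²)(1 - ‖v‖²) / ‖1 - v̄ u‖²` and `‖1 - v̄ u‖ ≥ 1 - ‖u‖ ‖v‖`,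
  -- while `(1 - ‖u‖ ‖v‖)² - (‖u‖ - ‖v‖)² = (1 - ‖u‖²)(1 - ‖v‖²)`.
  have hp := one_sub_sq_norm_mobius (one_sub_conj_mul_ne_zero hv hu)
  rw [← pdist_eq_norm_mobius] at hp
  have hd : 1 - ‖u‖ * ‖v‖ ≤ ‖1 - conj v * u‖ := by
    simpa [mul_comm] using one_sub_norm_mul_norm_le_norm_one_sub_conj_mul v u
  have huv : 0 < 1 - ‖u‖ * ‖v‖ := by nlinarith [norm_nonneg u, norm_nonneg v]
  have hX : 0 ≤ (1 - ‖v‖ ^ 2) * (1 - ‖u‖ ^ 2) :=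
    mul_nonneg (by nlinarith [norm_nonneg v]) (by nlinarith [norm_nonneg u])
  have key : (1 - ‖u‖ * ‖v‖) ^ 2 * (1 - pdist u v ^ 2) ≤ (1 - ‖v‖ ^ 2) * (1 - ‖u‖ ^ 2) := by
    rw [hp, mul_div_assoc', div_le_iff₀ (by nlinarith), mul_comm]
    exact mul_le_mul_of_nonneg_left (pow_le_pow_left₀ huv.le hd 2) hX
  refine abs_le_of_sq_le_sq ?_ (mul_nonneg (norm_nonneg _) huv.le)
  nlinarith [key]

section SchwarzPick

variable {φ : ℂ → ℂ} (hφ : DifferentiableOn ℂ φ (ball 0 1))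
  (hmap : MapsTo φ (ball 0 1) (ball 0 1))
include hφ hmap

lemma Dh_le_one {z : ℂ} (hz : ‖z‖ < 1) : Dh φ z ≤ 1 := by
  have hmaps : MapsTo (recenter φ z) (ball 0 1) (closedBall (recenter φ z 0) 1) := by
    rw [recenter_zero]; exact (mapsTo_recenter hmap hz).mono_right ball_subset_closedBall
  have := Complex.norm_deriv_le_one_of_mapsTo_ball (differentiableOn_recenter hφ hmap hz)
    hmaps one_pos
  rwa [← Dh_eq_norm_deriv recenter_zero, Dh_recenter hφ hmap hz (by simp), mobius_zero] at this

lemma pdist_map_le {z w : ℂ} (hz : ‖z‖ < 1) (hw : ‖w‖ < 1) : pdist (φ z) (φ w) ≤ pdist z w := by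
  have := Complex.norm_le_norm_of_mapsTo_ball (differentiableOn_recenter hφ hmap hw)
    ((mapsTo_recenter hmap hw).mono_right ball_subset_closedBall) recenter_zero
    (norm_mobius_lt_one hw hz)
  rwa [recenter_mobius hw hz, ← pdist_eq_norm_mobius, ← pdist_eq_norm_mobius] at this

lemma abs_norm_map_sub_norm_map_le {z w : ℂ} (hz : ‖z‖ < 1) (hw : ‖w‖ < 1) :
    |‖φ z‖ - ‖φ w‖| ≤ pdist z w * (1 - ‖φ z‖ * ‖φ w‖) := by
  have hφz := norm_lt_one_of_mapsTo hmap hz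
  have hφw := norm_lt_one_of_mapsTo hmap hw
  refine (abs_norm_sub_norm_le_pdist_mul hφz hφw).trans ?_
  gcongr
  · nlinarith [norm_nonneg (φ z), norm_nonneg (φ w)]
  · exact pdist_map_le hφ hmap hz hw

end SchwarzPick

lemma one_sub_mul_le_of_abs_sub_le {x y r : ℝ} (hx : x ≤ 1) (hy : y ≤ 1) (hr : 0 ≤ r)
    (h : |x - y| ≤ r * (1 - x * y)) : (1 - x) * (1 - r) ≤ (1 - y) * (1 + r) := by
  nlinarith [neg_abs_le (x - y), mul_nonneg hr (mul_nonneg (sub_nonneg.2 hx) (sub_nonneg.2 hy))]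

lemma one_sub_mul_sq_le_of_abs_sub_le {x y z r : ℝ} (hx : x ≤ 1) (hy : y ≤ 1) (hz : z ≤ 1)
    (hr₀ : 0 ≤ r) (hr₁ : r ≤ 1) (hxy : |x - y| ≤ r * (1 - x * y))
    (hyz : |y - z| ≤ r * (1 - y * z)) : (1 - x) * (1 - r) ^ 2 ≤ (1 - z) * (1 + r) ^ 2 :=
  calc (1 - x) * (1 - r) ^ 2 = (1 - x) * (1 - r) * (1 - r) := by ring
    _ ≤ (1 - y) * (1 + r) * (1 - r) :=
      mul_le_mul_of_nonneg_right (one_sub_mul_le_of_abs_sub_le hx hy hr₀ hxy) (by linarith)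
    _ = (1 - y) * (1 - r) * (1 + r) := by ring
    _ ≤ (1 - z) * (1 + r) * (1 + r) :=
      mul_le_mul_of_nonneg_right (one_sub_mul_le_of_abs_sub_le hy hz hr₀ hyz) (by linarith)
    _ = (1 - z) * (1 + r) ^ 2 := by ring

lemma abs_sub_le_of_abs_mul_sub_le {d a r : ℝ} (ha : 0 ≤ a) (hr : 0 ≤ r) (har : a * r < 1)
    (h : |d * (1 - r ^ 2 * a ^ 2) - (1 - r ^ 2) * a| ≤ r * (1 - a ^ 2)) :
    |d - a| ≤ r * (1 - a * d) := by
  obtain ⟨hlow, hupp⟩ := abs_le.1 h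
  have hupp' : d * (1 + a * r) ≤ a + r :=
    le_of_mul_le_mul_right (by linear_combination hupp) (by linarith : 0 < 1 - a * r)
  have hlow' : a - r ≤ d * (1 - a * r) :=
    le_of_mul_le_mul_right (by linear_combination hlow) (by positivity : 0 < 1 + a * r)
  exact abs_le.2 ⟨by linarith, by linarith⟩

lemma abs_Dh_mul_self_sub_norm_le {g : ℂ → ℂ} {ζ : ℂ} (hg : DifferentiableAt ℂ g ζ)
    (hζ : ‖ζ‖ < 1) (hgζ : ‖g ζ‖ < 1) (hDg : Dh g ζ ≤ 1) :
    |Dh (fun z => z * g z) ζ - ‖g ζ‖| ≤ ‖ζ‖ * (1 - ‖g ζ‖ * Dh (fun z => z * g z) ζ) := by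
  have hderiv : deriv (fun z => z * g z) ζ = g ζ + ζ * deriv g ζ := by
    simpa using ((hasDerivAt_id' ζ).fun_mul hg.hasDerivAt).deriv
  have har : ‖g ζ‖ * ‖ζ‖ < 1 := mul_lt_one_of_nonneg_of_lt_one_left (norm_nonneg _) hgζ hζ.le
  have hζg : ‖ζ‖ ^ 2 * ‖g ζ‖ ^ 2 < 1 := by
    rw [← mul_pow, mul_comm]; exact pow_lt_one₀ (by positivity) har two_ne_zero
  have hDψ : Dh (fun z => z * g z) ζ * (1 - ‖ζ‖ ^ 2 * ‖g ζ‖ ^ 2)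
      = (1 - ‖ζ‖ ^ 2) * ‖g ζ + ζ * deriv g ζ‖ := by
    rw [Dh, hderiv, norm_mul, mul_pow, div_mul_cancel₀ _ (by linarith)]
  have hSP : (1 - ‖ζ‖ ^ 2) * ‖deriv g ζ‖ ≤ 1 - ‖g ζ‖ ^ 2 := by
    rwa [Dh, div_le_one (by nlinarith [norm_nonneg (g ζ)])] at hDg
  have htri : |‖g ζ + ζ * deriv g ζ‖ - ‖g ζ‖| ≤ ‖ζ‖ * ‖deriv g ζ‖ := by
    simpa [norm_mul] using abs_norm_sub_norm_le (g ζ + ζ * deriv g ζ) (g ζ)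
  have hζ2 : 0 ≤ 1 - ‖ζ‖ ^ 2 := by nlinarith [norm_nonneg ζ]
  refine abs_sub_le_of_abs_mul_sub_le (norm_nonneg _) (norm_nonneg _) har ?_
  calc |Dh (fun z => z * g z) ζ * (1 - ‖ζ‖ ^ 2 * ‖g ζ‖ ^ 2) - (1 - ‖ζ‖ ^ 2) * ‖g ζ‖|
      = (1 - ‖ζ‖ ^ 2) * |‖g ζ + ζ * deriv g ζ‖ - ‖g ζ‖| := by
        rw [hDψ, ← mul_sub, abs_mul, abs_of_nonneg hζ2]
    _ ≤ ‖ζ‖ * ((1 - ‖ζ‖ ^ 2) * ‖deriv g ζ‖) := by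
        rw [mul_left_comm]; exact mul_le_mul_of_nonneg_left htri hζ2
    _ ≤ ‖ζ‖ * (1 - ‖g ζ‖ ^ 2) := mul_le_mul_of_nonneg_left hSP (norm_nonneg _)

lemma mapsTo_dslope_zero {ψ : ℂ → ℂ} (hψ : DifferentiableOn ℂ ψ (ball 0 1))
    (hmap : MapsTo ψ (ball 0 1) (ball 0 1)) (h0 : ψ 0 = 0) (h1 : ‖deriv ψ 0‖ < 1) :
    MapsTo (dslope ψ 0) (ball 0 1) (ball 0 1) := by
  -- Schwarz gives `‖dslope ψ 0‖ ≤ 1`; by maximum modulus, equality anywhere forces `‖ψ' 0‖ = 1`.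
  have hmap' : MapsTo ψ (ball 0 1) (closedBall (ψ 0) 1) := by
    rw [h0]; exact hmap.mono_right ball_subset_closedBall
  have hle {x : ℂ} (hx : x ∈ ball (0 : ℂ) 1) : ‖dslope ψ 0 x‖ ≤ 1 := by
    simpa using Complex.norm_dslope_le_div_of_mapsTo_ball hψ hmap' hx
  intro x hx
  refine mem_ball_zero_iff.2 ((hle hx).lt_of_ne fun hx1 => h1.ne ?_)
  have := Complex.norm_eqOn_of_isPreconnected_of_isMaxOn (convex_ball 0 1).isPreconnected
    isOpen_ball ((differentiableOn_dslope (ball_mem_nhds _ one_pos)).2 hψ) hx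
    (fun y hy => (hle hy).trans hx1.ge) (mem_ball_self one_pos)
  simpa [hx1, dslope_same] using this

lemma golusin_estimate_of_map_zero {ψ : ℂ → ℂ} (hψ : DifferentiableOn ℂ ψ (ball 0 1))
    (hmap : MapsTo ψ (ball 0 1) (ball 0 1)) (h0 : ψ 0 = 0) (h1 : Dh ψ 0 < 1) {ζ : ℂ}
    (hζ : ‖ζ‖ < 1) :
    (1 - Dh ψ 0) * (1 - ‖ζ‖) ^ 2 ≤ (1 - Dh ψ ζ) * (1 + ‖ζ‖) ^ 2 ∧
      (1 - Dh ψ ζ) * (1 - ‖ζ‖) ^ 2 ≤ (1 - Dh ψ 0) * (1 + ‖ζ‖) ^ 2 := by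
  set g := dslope ψ 0
  have hψg : ψ = fun z => z * g z :=
    funext fun z => by simpa [h0] using (sub_smul_dslope ψ 0 z).symm
  have hg0 : ‖g 0‖ = Dh ψ 0 := by rw [Dh_eq_norm_deriv h0, ← dslope_same]
  have hgd : DifferentiableOn ℂ g (ball 0 1) :=
    (differentiableOn_dslope (ball_mem_nhds _ one_pos)).2 hψ
  have hgmap := mapsTo_dslope_zero hψ hmap h0 (by rwa [← Dh_eq_norm_deriv h0])
  have hgζ := norm_lt_one_of_mapsTo hgmap hζ
  have hzero : ‖(0 : ℂ)‖ < 1 := by simp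
  have hg0_lt := norm_lt_one_of_mapsTo hgmap hzero
  have hab : |‖g ζ‖ - ‖g 0‖| ≤ ‖ζ‖ * (1 - ‖g ζ‖ * ‖g 0‖) := by
    simpa [pdist] using abs_norm_map_sub_norm_map_le hgd hgmap hζ hzero
  have hDa : |Dh ψ ζ - ‖g ζ‖| ≤ ‖ζ‖ * (1 - ‖g ζ‖ * Dh ψ ζ) := by
    rw [hψg]
    exact abs_Dh_mul_self_sub_norm_le (hgd.differentiableAt (isOpen_ball.mem_nhds
      (mem_ball_zero_iff.2 hζ))) hζ hgζ (Dh_le_one hgd hgmap hζ)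
  have hD := Dh_le_one hψ hmap hζ
  rw [← hg0]
  exact ⟨one_sub_mul_sq_le_of_abs_sub_le hg0_lt.le hgζ.le hD (norm_nonneg _) hζ.le
      (by rwa [abs_sub_comm, mul_comm (‖g 0‖)]) (by rwa [abs_sub_comm]),
    one_sub_mul_sq_le_of_abs_sub_le hD hgζ.le hg0_lt.le (norm_nonneg _) hζ.le
      (by rwa [mul_comm (Dh ψ ζ)]) hab⟩

lemma exp_two_mul_hdist {z w : ℂ} (h : pdist z w < 1) :
    Real.exp (2 * hdist z w) = ((1 + pdist z w) / (1 - pdist z w)) ^ 2 := by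
  have : 0 ≤ pdist z w := norm_nonneg _
  rw [hdist, show (2 : ℝ) = ((2 : ℕ) : ℝ) by norm_num, ← Real.log_pow,
    Real.exp_log (by apply pow_pos; apply div_pos <;> linarith)]

theorem golusin_quotient_estimate (φ : ℂ → ℂ)
    (hφ : DifferentiableOn ℂ φ (ball (0:ℂ) 1))
    (hmap : MapsTo φ (ball (0:ℂ) 1) (ball (0:ℂ) 1)) :
    ∀ z ∈ ball (0:ℂ) 1, ∀ w ∈ ball (0:ℂ) 1, Dh φ w < 1 →
      Real.exp (-(2 * hdist z w)) ≤ (1 - Dh φ z) / (1 - Dh φ w)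
      ∧ (1 - Dh φ z) / (1 - Dh φ w) ≤ Real.exp (2 * hdist z w) := by
  intro z hz w hw hDw
  rw [mem_ball_zero_iff] at hz hw
  have hζ := norm_mobius_lt_one hw hz
  have hD0 : Dh (recenter φ w) 0 = Dh φ w := by
    rw [Dh_recenter hφ hmap hw (by simp), mobius_zero]
  obtain ⟨hlow, hupp⟩ := golusin_estimate_of_map_zero (differentiableOn_recenter hφ hmap hw)
    (mapsTo_recenter hmap hw) recenter_zero (hD0 ▸ hDw) hζ
  rw [hD0, Dh_recenter hφ hmap hw hζ, mobius_mobius hw hz, ← pdist_eq_norm_mobius] at hlow hupp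
  have hr : pdist z w < 1 := pdist_eq_norm_mobius z w ▸ hζ
  have hp : 0 ≤ pdist z w := norm_nonneg _
  have hb : 0 < 1 - Dh φ w := sub_pos.2 hDw
  rw [Real.exp_neg, exp_two_mul_hdist hr, ← inv_pow, inv_div, div_pow, div_pow]
  constructor
  · rw [div_le_div_iff₀ (by nlinarith) hb]; linarith
  · rw [div_le_div_iff₀ hb (by nlinarith)]; linarith
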